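/- arXiv:2110.01707 — 12 statements merged into one kernel-verified Lean document; each statement's English description precedes it below -/
import Mathlib

section
/- Let d ≥ 1, let x* ∈ ℝ^d have all coordinates strictly positive, let p* ≥ 0, and let u*(x) = p*·min{x₁/x*₁, …, x_d/x*_d, 1} be the associated Leontief-type function on the nonnegative orthant ℝ^d₊. For any λ ∈ ℝ^d₊ with Σᵢ λᵢ = 1, define the linear price vector q by qᵢ = λᵢ·p*/x*ᵢ. Then for every x ∈ ℝ^d₊ one has u*(x) − q·x ≤ 0, with equality at x = x* (so x* maximizes the buyer utility u*(x) − q·x over ℝ^d₊), and the resulting payment satisfies q·x* = p* = u*(x*). -/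
/-- For the Leontief-type imitative value function
`u*(x) = p* · min{x₁/x*₁, …, x_d/x*_d, 1}` and any convex-combination linear price
`qᵢ = λᵢ·p*/x*ᵢ`, the buyer utility `u*(x) − q·x` is ≤ 0 on the nonnegative
orthant, with equality at `x*`, and the payment is `q·x* = p* = u*(x*)`. -/
theorem stmt0 (d : ℕ) (hd : 1 ≤ d)
    (xstar : Fin d → ℝ) (hxstar : ∀ i, 0 < xstar i)
    (pstar : ℝ) (hpstar : 0 ≤ pstar)
    (lam : Fin d → ℝ) (hlam : ∀ i, 0 ≤ lam i) (hlamsum : ∑ i, lam i = 1)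
    (ustar : (Fin d → ℝ) → ℝ)
    (hustar : ∀ x : Fin d → ℝ,
      ustar x = pstar * min (⨅ i, x i / xstar i) 1)
    (q : Fin d → ℝ) (hq : ∀ i, q i = lam i * pstar / xstar i) :
    (∀ x : Fin d → ℝ, (∀ i, 0 ≤ x i) → ustar x - ∑ i, q i * x i ≤ 0) ∧
    ustar xstar - ∑ i, q i * xstar i = 0 ∧
    ∑ i, q i * xstar i = pstar ∧
    ustar xstar = pstar := by
  haveI : Nonempty (Fin d) := ⟨⟨0, hd⟩⟩
  have hus : ustar xstar = pstar := by
    have h1 : ∀ i, xstar i / xstar i = 1 := fun i => div_self (hxstar i).ne'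
    rw [hustar]
    simp [h1, ciInf_const]
  have hpay : ∑ i, q i * xstar i = pstar := by
    have : ∀ i ∈ Finset.univ, q i * xstar i = lam i * pstar := by
      intro i _
      rw [hq i, div_mul_eq_mul_div, mul_div_assoc, div_self (hxstar i).ne', mul_one]
    rw [Finset.sum_congr rfl this, ← Finset.sum_mul, hlamsum, one_mul]
  refine ⟨?_, by rw [hus, hpay]; ring, hpay, hus⟩
  intro x hx
  rw [hustar, sub_nonpos]
  set m : ℝ := min (⨅ i, x i / xstar i) 1 with hm
  calc pstar * m = ∑ i, lam i * (pstar * m) := by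
        rw [← Finset.sum_mul, hlamsum, one_mul]
    _ ≤ ∑ i, q i * x i := by
        apply Finset.sum_le_sum
        intro i _
        have hle : m ≤ x i / xstar i :=
          le_trans (min_le_left _ _) (ciInf_le (Finite.bddBelow_range _) i)
        have : lam i * (pstar * m) ≤ lam i * (pstar * (x i / xstar i)) := by
          apply mul_le_mul_of_nonneg_left (mul_le_mul_of_nonneg_left hle hpstar) (hlam i)
        refine this.trans_eq ?_
        rw [hq i]
        field_simp
end

section
/- Let d ≥ 1, let c : ℝ^d₊ → ℝ be monotone non-decreasing with respect to the coordinatewise order with c(0) = 0, let x̄ ∈ ℝ^d have all coordinates strictly positive, and let p̄ ∈ ℝ satisfy (1 − α)·p̄ ≥ c(x̄) − c(α·x̄) for all α ∈ [0,1]. Define ū(x) = p̄·min{x₁/x̄₁, …, x_d/x̄_d, 1} on ℝ^d₊. Then: (i) p̄ ≥ c(x̄) ≥ 0; (ii) ū is concave and monotone non-decreasing on ℝ^d₊ with ū(0) = 0 and ū(x̄) = p̄; and (iii) for every x ∈ ℝ^d₊, ū(x) − c(x) ≤ ū(x̄) − c(x̄) = p̄ − c(x̄) (i.e., ū is feasible: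 the seller's profit u(x) − c(x) is maximized at x̄). -/
/-- feasibility half of Lemma 1: with cost `c` monotone
non-decreasing, `c(0) = 0`, `x̄` strictly positive and `p̄` satisfying
`(1 − α)·p̄ ≥ c(x̄) − c(α·x̄)` for all `α ∈ [0,1]`, the Leontief-type function
`ū(x) = p̄·min{xᵢ/x̄ᵢ, 1}` satisfies: (i) `p̄ ≥ c(x̄) ≥ 0`; (ii) `ū` is concave
and monotone non-decreasing on the nonnegative orthant with `ū(0) = 0` and
`ū(x̄) = p̄`; (iii) the seller's profit `ū(x) − c(x)` is maximized at `x̄`. -/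
theorem stmt1 (d : ℕ) (hd : 1 ≤ d)
    (c : (Fin d → ℝ) → ℝ)
    (hcmono : ∀ x y : Fin d → ℝ, (∀ i, 0 ≤ x i) → (∀ i, x i ≤ y i) → c x ≤ c y)
    (hc0 : c 0 = 0)
    (xbar : Fin d → ℝ) (hxbar : ∀ i, 0 < xbar i)
    (pbar : ℝ)
    (hpbar : ∀ α ∈ Set.Icc (0:ℝ) 1, (1 - α) * pbar ≥ c xbar - c (α • xbar))
    (ubar : (Fin d → ℝ) → ℝ)
    (hubar : ∀ x : Fin d → ℝ,
      ubar x = pbar * min (⨅ i, x i / xbar i) 1) :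
    (pbar ≥ c xbar ∧ c xbar ≥ 0) ∧
    (∀ x y : Fin d → ℝ, (∀ i, 0 ≤ x i) → (∀ i, 0 ≤ y i) →
      ∀ t ∈ Set.Icc (0:ℝ) 1,
        t * ubar x + (1 - t) * ubar y ≤ ubar (t • x + (1 - t) • y)) ∧
    (∀ x y : Fin d → ℝ, (∀ i, 0 ≤ x i) → (∀ i, x i ≤ y i) → ubar x ≤ ubar y) ∧
    ubar 0 = 0 ∧ ubar xbar = pbar ∧
    (∀ x : Fin d → ℝ, (∀ i, 0 ≤ x i) → ubar x - c x ≤ ubar xbar - c xbar) ∧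
    ubar xbar - c xbar = pbar - c xbar := by
  haveI : Nonempty (Fin d) := ⟨⟨0, hd⟩⟩
  have hcx0 : c xbar ≥ 0 := by
    rw [← hc0]; exact hcmono 0 xbar (fun i => le_refl 0) (fun i => (hxbar i).le)
  have hpc : pbar ≥ c xbar := by
    have := hpbar 0 ⟨le_refl 0, zero_le_one⟩
    simpa [hc0] using this
  have hp0 : 0 ≤ pbar := le_trans hcx0 hpc
  set m : (Fin d → ℝ) → ℝ := fun x => min (⨅ i, x i / xbar i) 1 with hm
  have hbdd : ∀ x : Fin d → ℝ, BddBelow (Set.range fun i => x i / xbar i) :=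
    fun x => (Set.finite_range _).bddBelow
  have hm_le : ∀ x i, m x ≤ x i / xbar i := fun x i =>
    (min_le_left _ _).trans (ciInf_le (hbdd x) i)
  have hm_le1 : ∀ x, m x ≤ 1 := fun x => min_le_right _ _
  have le_m : ∀ (x : Fin d → ℝ) (b : ℝ), (∀ i, b ≤ x i / xbar i) → b ≤ 1 → b ≤ m x :=
    fun x b hb h1 => le_min (le_ciInf hb) h1
  have hm_nonneg : ∀ x : Fin d → ℝ, (∀ i, 0 ≤ x i) → 0 ≤ m x := fun x hx =>
    le_m x 0 (fun i => div_nonneg (hx i) (hxbar i).le) zero_le_one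
  have hmxbar : (⨅ i, xbar i / xbar i) ⊓ 1 = (1:ℝ) := by
    have : ∀ i, xbar i / xbar i = 1 := fun i => div_self (hxbar i).ne'
    simp [this]
  -- optimality pieces
  have hopt : ∀ x : Fin d → ℝ, (∀ i, 0 ≤ x i) → ubar x - c x ≤ ubar xbar - c xbar := by
    intro x hx
    set α := m x with hα
    have hα0 : 0 ≤ α := hm_nonneg x hx
    have hα1 : α ≤ 1 := hm_le1 x
    have hle : ∀ i, α * xbar i ≤ x i := fun i =>
      (le_div_iff₀ (hxbar i)).mp (hm_le x i)
    have hcc : c (α • xbar) ≤ c x :=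
      hcmono (α • xbar) x (fun i => mul_nonneg hα0 (hxbar i).le) hle
    have hp := hpbar α ⟨hα0, hα1⟩
    have hexp : (1 - α) * pbar = pbar - α * pbar := by ring
    rw [hubar x, hubar xbar, hmxbar]
    have : pbar * α ≤ pbar - c xbar + c (α • xbar) := by
      rw [hexp] at hp; linarith
    linarith
  refine ⟨⟨hpc, hcx0⟩, ?_, ?_, ?_, ?_, hopt, by rw [hubar xbar, hmxbar]; ring⟩
  · -- concavity
    intro x y hx hy t ⟨ht0, ht1⟩
    rw [hubar x, hubar y, hubar (t • x + (1 - t) • y)]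
    have key : t * m x + (1 - t) * m y ≤ m (t • x + (1 - t) • y) := by
      apply le_m
      · intro i
        have : (t • x + (1 - t) • y) i / xbar i
            = t * (x i / xbar i) + (1 - t) * (y i / xbar i) := by
          simp [Pi.add_apply, Pi.smul_apply, smul_eq_mul]
          field_simp
        rw [this]
        have h1 : t * m x ≤ t * (x i / xbar i) :=
          mul_le_mul_of_nonneg_left (hm_le x i) ht0
        have h2 : (1 - t) * m y ≤ (1 - t) * (y i / xbar i) :=
          mul_le_mul_of_nonneg_left (hm_le y i) (by linarith)
        linarith
      · have h1 : t * m x ≤ t * 1 := mul_le_mul_of_nonneg_left (hm_le1 x) ht0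
        have h2 : (1 - t) * m y ≤ (1 - t) * 1 :=
          mul_le_mul_of_nonneg_left (hm_le1 y) (by linarith)
        linarith
    calc t * (pbar * m x) + (1 - t) * (pbar * m y)
        = pbar * (t * m x + (1 - t) * m y) := by ring
      _ ≤ pbar * m (t • x + (1 - t) • y) :=
          mul_le_mul_of_nonneg_left key hp0
  · -- monotone
    intro x y hx hxy
    rw [hubar x, hubar y]
    refine mul_le_mul_of_nonneg_left ?_ hp0
    refine le_m y (m x) (fun i => (hm_le x i).trans ?_) (hm_le1 x)
    gcongr
    · exact (hxbar i).le
    · exact hxy i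
  · -- ubar 0 = 0
    rw [hubar 0]
    have : ∀ i : Fin d, (0 : Fin d → ℝ) i / xbar i = 0 := fun i => by simp
    simp [this]
  · rw [hubar xbar, hmxbar]; ring
end

section
/- Let d ≥ 1, let c : ℝ^d₊ → ℝ, let x̄ ∈ ℝ^d₊, and let u : ℝ^d₊ → ℝ be concave with u(0) ≥ 0. If u(x̄) − c(x̄) ≥ u(α·x̄) − c(α·x̄) for all α ∈ [0,1], then for every α ∈ [0,1) one has (1 − α)·u(x̄) ≥ c(x̄) − c(α·x̄); consequently u(x̄) ≥ sup_{α ∈ [0,1)} (c(x̄) − c(α·x̄))/(1 − α). -/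
/-- optimality half of Lemmas 1–2: if `u` is concave on the
nonnegative orthant with `u(0) ≥ 0` and the seller's profit `u(x) − c(x)` along
the segment `{α·x̄ : α ∈ [0,1]}` is maximized at `x̄`, then
`(1 − α)·u(x̄) ≥ c(x̄) − c(α·x̄)` for all `α ∈ [0,1)`, hence
`u(x̄) ≥ sup_{α ∈ [0,1)} (c(x̄) − c(α·x̄))/(1 − α)`. -/
theorem stmt2 (d : ℕ) (hd : 1 ≤ d)
    (c : (Fin d → ℝ) → ℝ)
    (xbar : Fin d → ℝ) (hxbar : ∀ i, 0 ≤ xbar i)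
    (u : (Fin d → ℝ) → ℝ)
    (hconc : ∀ x y : Fin d → ℝ, (∀ i, 0 ≤ x i) → (∀ i, 0 ≤ y i) →
      ∀ t ∈ Set.Icc (0:ℝ) 1,
        t * u x + (1 - t) * u y ≤ u (t • x + (1 - t) • y))
    (hu0 : 0 ≤ u 0)
    (hfeas : ∀ α ∈ Set.Icc (0:ℝ) 1, u xbar - c xbar ≥ u (α • xbar) - c (α • xbar)) :
    (∀ α ∈ Set.Ico (0:ℝ) 1, (1 - α) * u xbar ≥ c xbar - c (α • xbar)) ∧
    u xbar ≥ ⨆ α : Set.Ico (0:ℝ) 1, (c xbar - c ((α : ℝ) • xbar)) / (1 - (α : ℝ)) := by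
  have key : ∀ α ∈ Set.Ico (0:ℝ) 1, (1 - α) * u xbar ≥ c xbar - c (α • xbar) := by
    intro α hα
    obtain ⟨h0, h1⟩ := hα
    have hconc' := hconc xbar 0 hxbar (fun i => le_refl 0) α ⟨h0, h1.le⟩
    have hsmul : α • xbar + (1 - α) • (0 : Fin d → ℝ) = α • xbar := by
      simp
    rw [hsmul] at hconc'
    have h2 : α * u xbar ≤ u (α • xbar) := by nlinarith
    have h3 := hfeas α ⟨h0, h1.le⟩
    nlinarith
  refine ⟨key, ?_⟩
  have hne : Nonempty (Set.Ico (0:ℝ) 1) := ⟨⟨0, by norm_num, by norm_num⟩⟩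
  apply ciSup_le
  intro ⟨α, hα⟩
  have h1 : (0:ℝ) < 1 - α := by linarith [hα.2]
  rw [div_le_iff₀ h1]
  have := key α hα
  linarith [mul_comm (1 - α) (u xbar) ▸ this]
end

section
/- Let d ≥ 1, let c : ℝ^d₊ → ℝ be monotone non-decreasing with respect to the coordinatewise order with c(0) = 0, let x̄ ∈ ℝ^d have all coordinates strictly positive, and suppose p̄ := sup_{α ∈ [0,1)} (c(x̄) − c(α·x̄))/(1 − α) is finite. Consider the class C of functions u : ℝ^d₊ → ℝ that are concave, monotone non-decreasing, nonnegative, and satisfy u(0) = 0. Then the minimum of u(x̄) over all u ∈ C satisfying the feasibility constraint u(x̄) − c(x̄) ≥ u(x) − c(x) for all x ∈ ℝ^d₊ equals p̄, and it is attained by the Leontief-type function ū(x) = p̄·min{x₁/x̄₁, …, x_d/x̄_d, 1}. -/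
/-- Membership in the class `C`: concave on the nonnegative orthant, monotone
non-decreasing on it, nonnegative on it, and `u(0) = 0`. -/
def InClassC (d : ℕ) (u : (Fin d → ℝ) → ℝ) : Prop :=
  (∀ x y : Fin d → ℝ, (∀ i, 0 ≤ x i) → (∀ i, 0 ≤ y i) →
    ∀ t ∈ Set.Icc (0:ℝ) 1,
      t * u x + (1 - t) * u y ≤ u (t • x + (1 - t) • y)) ∧
  (∀ x y : Fin d → ℝ, (∀ i, 0 ≤ x i) → (∀ i, x i ≤ y i) → u x ≤ u y) ∧
  (∀ x : Fin d → ℝ, (∀ i, 0 ≤ x i) → 0 ≤ u x) ∧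
  u 0 = 0

/-- Lemmas 1–2 combined: with `c` monotone non-decreasing,
`c(0) = 0`, `x̄` strictly positive and
`p̄ = sup_{α ∈ [0,1)} (c(x̄) − c(α·x̄))/(1 − α)` finite, the minimum of `u(x̄)`
over all `u ∈ C` feasible for trade at `x̄` (i.e. `u(x̄) − c(x̄) ≥ u(x) − c(x)`
for all `x` in the orthant) equals `p̄`, attained by the Leontief-type function
`ū(x) = p̄·min{xᵢ/x̄ᵢ, 1}`. -/
theorem stmt3 (d : ℕ) (hd : 1 ≤ d)
    (c : (Fin d → ℝ) → ℝ)
    (hcmono : ∀ x y : Fin d → ℝ, (∀ i, 0 ≤ x i) → (∀ i, x i ≤ y i) → c x ≤ c y)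
    (hc0 : c 0 = 0)
    (xbar : Fin d → ℝ) (hxbar : ∀ i, 0 < xbar i)
    (pbar : ℝ)
    (hpbar : IsLUB {s : ℝ | ∃ α ∈ Set.Ico (0:ℝ) 1,
      s = (c xbar - c (α • xbar)) / (1 - α)} pbar)
    (ubar : (Fin d → ℝ) → ℝ)
    (hubar : ∀ x : Fin d → ℝ,
      ubar x = pbar * min (⨅ i, x i / xbar i) 1) :
    IsLeast {y : ℝ | ∃ u : (Fin d → ℝ) → ℝ, InClassC d u ∧
      (∀ x : Fin d → ℝ, (∀ i, 0 ≤ x i) → u x - c x ≤ u xbar - c xbar) ∧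
      y = u xbar} pbar ∧
    InClassC d ubar ∧
    (∀ x : Fin d → ℝ, (∀ i, 0 ≤ x i) → ubar x - c x ≤ ubar xbar - c xbar) ∧
    ubar xbar = pbar := by
  haveI : Nonempty (Fin d) := ⟨⟨0, hd⟩⟩
  set m : (Fin d → ℝ) → ℝ := fun x => min (⨅ i, x i / xbar i) 1 with hm
  have hbdd : ∀ x : Fin d → ℝ, BddBelow (Set.range fun i => x i / xbar i) :=
    fun x => (Set.finite_range _).bddBelow
  have hm_le : ∀ (x : Fin d → ℝ) i, m x ≤ x i / xbar i :=
    fun x i => (min_le_left _ _).trans (ciInf_le (hbdd x) i)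
  have hm_le1 : ∀ x : Fin d → ℝ, m x ≤ 1 := fun x => min_le_right _ _
  have hm_nonneg : ∀ x : Fin d → ℝ, (∀ i, 0 ≤ x i) → 0 ≤ m x := fun x hx =>
    le_min (le_ciInf fun i => div_nonneg (hx i) (hxbar i).le) zero_le_one
  -- c xbar ≤ pbar and 0 ≤ pbar
  have hcx_mem : c xbar ∈ {s : ℝ | ∃ α ∈ Set.Ico (0:ℝ) 1,
      s = (c xbar - c (α • xbar)) / (1 - α)} := by
    refine ⟨0, ⟨le_rfl, zero_lt_one⟩, ?_⟩
    simp [hc0]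
  have hcx_le : c xbar ≤ pbar := hpbar.1 hcx_mem
  have hcx_nonneg : 0 ≤ c xbar := hc0 ▸ hcmono 0 xbar (fun i => le_rfl) (fun i => (hxbar i).le)
  have hp_nonneg : 0 ≤ pbar := hcx_nonneg.trans hcx_le
  -- ubar xbar = pbar
  have hmx : m xbar = 1 := by
    have : (⨅ i, xbar i / xbar i) = 1 := by
      have : ∀ i, xbar i / xbar i = 1 := fun i => div_self (hxbar i).ne'
      simp [this]
    simp [hm, this]
  have hubarx : ubar xbar = pbar := by
    rw [hubar]
    rw [show ((⨅ i, xbar i / xbar i) ⊓ 1 : ℝ) = m xbar from rfl, hmx]; ring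
  -- key bound used in feasibility: for α ∈ [0,1), c xbar - c (α • xbar) ≤ pbar * (1-α)
  have hkey : ∀ α : ℝ, 0 ≤ α → α < 1 → c xbar - c (α • xbar) ≤ pbar * (1 - α) := by
    intro α h0 h1
    have hmem : (c xbar - c (α • xbar)) / (1 - α) ≤ pbar :=
      hpbar.1 ⟨α, ⟨h0, h1⟩, rfl⟩
    have h1α : 0 < 1 - α := by linarith
    calc c xbar - c (α • xbar) = (c xbar - c (α • xbar)) / (1 - α) * (1 - α) := by
          field_simp
      _ ≤ pbar * (1 - α) := by
          exact mul_le_mul_of_nonneg_right hmem h1α.le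
  -- feasibility of ubar
  have hfeas : ∀ x : Fin d → ℝ, (∀ i, 0 ≤ x i) → ubar x - c x ≤ ubar xbar - c xbar := by
    intro x hx
    rw [hubarx, hubar]
    by_cases h1 : (1:ℝ) ≤ ⨅ i, x i / xbar i
    · have hmx1 : min (⨅ i, x i / xbar i) 1 = 1 := min_eq_right h1
      have hge : ∀ i, xbar i ≤ x i := by
        intro i
        have := (ciInf_le (hbdd x) i).trans' h1
        rw [le_div_iff₀ (hxbar i)] at this; linarith
      have := hcmono xbar x (fun i => (hxbar i).le) hge
      rw [hmx1]; linarith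
    · push_neg at h1
      set α := ⨅ i, x i / xbar i with hα
      have hα0 : 0 ≤ α := le_ciInf fun i => div_nonneg (hx i) (hxbar i).le
      have hmin : min α 1 = α := min_eq_left h1.le
      have hge : ∀ i, (α • xbar) i ≤ x i := by
        intro i
        have := ciInf_le (hbdd x) i
        rw [le_div_iff₀ (hxbar i)] at this
        simpa [smul_eq_mul] using this
      have hce : c (α • xbar) ≤ c x := by
        refine hcmono _ x (fun i => ?_) hge
        simp only [Pi.smul_apply, smul_eq_mul]
        exact mul_nonneg hα0 (hxbar i).le
      have hk := hkey α hα0 h1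
      rw [hmin]
      nlinarith
  -- ubar in class C
  have hclass : InClassC d ubar := by
    refine ⟨?_, ?_, ?_, ?_⟩
    · intro x y hx hy t ht
      obtain ⟨ht0, ht1⟩ := ht
      rw [hubar, hubar, hubar]
      have hz : ∀ i, (t • x + (1 - t) • y) i / xbar i
          = t * (x i / xbar i) + (1 - t) * (y i / xbar i) := by
        intro i
        have := (hxbar i).ne'
        simp only [Pi.add_apply, Pi.smul_apply, smul_eq_mul]
        field_simp
        try ring
      have key : t * m x + (1 - t) * m y ≤ m (t • x + (1 - t) • y) := by
        refine le_min (le_ciInf fun i => ?_) ?_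
        · rw [hz i]
          have h1 := mul_le_mul_of_nonneg_left (hm_le x i) ht0
          have h2 := mul_le_mul_of_nonneg_left (hm_le y i) (by linarith : (0:ℝ) ≤ 1 - t)
          linarith
        · have h1 := mul_le_mul_of_nonneg_left (hm_le1 x) ht0
          have h2 := mul_le_mul_of_nonneg_left (hm_le1 y) (by linarith : (0:ℝ) ≤ 1 - t)
          linarith
      have := mul_le_mul_of_nonneg_left key hp_nonneg
      calc t * (pbar * m x) + (1 - t) * (pbar * m y)
          = pbar * (t * m x + (1 - t) * m y) := by ring
        _ ≤ pbar * m (t • x + (1 - t) • y) := this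
    · intro x y hx hxy
      rw [hubar, hubar]
      refine mul_le_mul_of_nonneg_left ?_ hp_nonneg
      refine min_le_min (ciInf_mono (hbdd x) fun i => ?_) le_rfl
      exact (div_le_div_iff_of_pos_right (hxbar i)).mpr (hxy i)
    · intro x hx
      rw [hubar]
      exact mul_nonneg hp_nonneg (hm_nonneg x hx)
    · rw [hubar]
      have : (⨅ i : Fin d, (0:Fin d → ℝ) i / xbar i) = 0 := by
        simp
      rw [this]; simp
  -- lower bound
  have hlb : ∀ y ∈ {y : ℝ | ∃ u : (Fin d → ℝ) → ℝ, InClassC d u ∧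
      (∀ x : Fin d → ℝ, (∀ i, 0 ≤ x i) → u x - c x ≤ u xbar - c xbar) ∧
      y = u xbar}, pbar ≤ y := by
    rintro y ⟨u, ⟨hconc, humono, hunn, hu0⟩, hufeas, rfl⟩
    refine hpbar.2 ?_
    rintro s ⟨α, ⟨hα0, hα1⟩, rfl⟩
    have h1α : 0 < 1 - α := by linarith
    rw [div_le_iff₀ h1α]
    -- concavity: α * u xbar ≤ u (α • xbar)
    have hcc := hconc xbar 0 (fun i => (hxbar i).le) (fun i => le_rfl) α ⟨hα0, hα1.le⟩
    rw [hu0] at hcc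
    have hcc' : α * u xbar ≤ u (α • xbar) := by
      have : α • xbar + (1 - α) • (0 : Fin d → ℝ) = α • xbar := by simp
      rw [this] at hcc; linarith
    have hf := hufeas (α • xbar) (fun i => by
      simp only [Pi.smul_apply, smul_eq_mul]
      exact mul_nonneg hα0 (hxbar i).le)
    nlinarith
  exact ⟨⟨⟨ubar, hclass, hfeas, hubarx.symm⟩, hlb⟩, hclass, hfeas, hubarx⟩
end

section
/- Let d ≥ 1, let c : ℝ^d₊ → ℝ be monotone non-decreasing with respect to the coordinatewise order with c(0) = 0, let x* ∈ ℝ^d have all coordinates strictly positive, and let p* ∈ ℝ satisfy (1 − α)·p* ≥ c(x*) − c(α·x*) for all α ∈ [0,1]. Let u*(x) = p*·min{x₁/x*₁, …, x_d/x*_d, 1} on ℝ^d₊. Then for every price vector q ∈ ℝ^d₊ and every x ∈ ℝ^d₊ maximizing the buyer utility, i.e., satisfying u*(x) − q·x ≥ u*(x') − q·x' for all x' ∈ ℝ^d₊, the seller's revenue satisfies q·x − c(x) ≤ p* − c(x*). -/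
/-- seller-optimality part of Theorem 1: under the Leontief-type
imitative value function `u*(x) = p*·min{xᵢ/x*ᵢ, 1}` (with `p*` satisfying
`(1 − α)·p* ≥ c(x*) − c(α·x*)` for all `α ∈ [0,1]`), no linear pricing scheme
can earn the seller more than `p* − c(x*)`: for every nonnegative price vector
`q` and every best-response bundle `x` of the buyer, `q·x − c(x) ≤ p* − c(x*)`. -/
theorem stmt4 (d : ℕ) (hd : 1 ≤ d)
    (c : (Fin d → ℝ) → ℝ)
    (hcmono : ∀ x y : Fin d → ℝ, (∀ i, 0 ≤ x i) → (∀ i, x i ≤ y i) → c x ≤ c y)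
    (hc0 : c 0 = 0)
    (xstar : Fin d → ℝ) (hxstar : ∀ i, 0 < xstar i)
    (pstar : ℝ)
    (hpstar : ∀ α ∈ Set.Icc (0:ℝ) 1, (1 - α) * pstar ≥ c xstar - c (α • xstar))
    (ustar : (Fin d → ℝ) → ℝ)
    (hustar : ∀ x : Fin d → ℝ,
      ustar x = pstar * min (⨅ i, x i / xstar i) 1) :
    ∀ q : Fin d → ℝ, (∀ i, 0 ≤ q i) →
    ∀ x : Fin d → ℝ, (∀ i, 0 ≤ x i) →
    (∀ x' : Fin d → ℝ, (∀ i, 0 ≤ x' i) →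
      ustar x' - ∑ i, q i * x' i ≤ ustar x - ∑ i, q i * x i) →
    ∑ i, q i * x i - c x ≤ pstar - c xstar := by
  intro q hq x hx hbr
  haveI : Nonempty (Fin d) := ⟨⟨0, hd⟩⟩
  set m : ℝ := min (⨅ i, x i / xstar i) 1 with hm
  have hbdd : BddBelow (Set.range fun i => x i / xstar i) :=
    ⟨0, by rintro y ⟨i, rfl⟩; exact div_nonneg (hx i) (hxstar i).le⟩
  have hinf0 : 0 ≤ ⨅ i, x i / xstar i :=
    le_ciInf fun i => div_nonneg (hx i) (hxstar i).le
  have hm0 : 0 ≤ m := le_min hinf0 zero_le_one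
  have hm1 : m ≤ 1 := min_le_right _ _
  have hmx : ∀ i, m * xstar i ≤ x i := by
    intro i
    have h1 : m ≤ x i / xstar i := (min_le_left _ _).trans (ciInf_le hbdd i)
    exact (le_div_iff₀ (hxstar i)).mp h1
  have hcx : c (m • xstar) ≤ c x := by
    refine hcmono _ _ (fun i => mul_nonneg hm0 (hxstar i).le) (fun i => hmx i)
  -- best response against 0
  have h0 := hbr 0 (fun i => le_rfl)
  have hu0 : ustar 0 = 0 := by
    rw [hustar]
    have : (⨅ i : Fin d, (0 : Fin d → ℝ) i / xstar i) = 0 := by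
      simp [Pi.zero_apply]
    rw [this]
    simp
  have hsum0 : (∑ i, q i * (0 : Fin d → ℝ) i) = 0 := by simp
  rw [hu0, hsum0, hustar] at h0
  have hqx : ∑ i, q i * x i ≤ pstar * m := by linarith
  have hp := hpstar m ⟨hm0, hm1⟩
  linarith
end

section
/- Let d ≥ 1, let X ⊆ ℝ^d₊ be a convex set containing 0, let c : X → ℝ be monotone non-decreasing with respect to the coordinatewise order with c(0) = 0, and let v : X → ℝ. For x̄ ∈ X let p̄_c(x̄) := sup_{α ∈ [0,1)} (c(x̄) − c(α·x̄))/(1 − α), and assume p̄_c(x̄) < ∞ for every x̄ ∈ X. Call a pair (u, x̄) with u ∈ C and x̄ ∈ X feasible if u(x̄) − c(x̄) ≥ u(x) − c(x) for all x ∈ X. Then sup{ v(x̄) − u(x̄) : (u, x̄) feasible } = sup{ v(x̄) − p̄_c(x̄) : x̄ ∈ X }. -/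
/-- Construction of the imitation value function: for `x̄ ∈ X` there is
`u ∈ C` with `u(x̄) = p̄_c(x̄)` which is feasible. -/
lemma exists_u (d : ℕ) (hd : 1 ≤ d)
    (X : Set (Fin d → ℝ)) (hXconv : Convex ℝ X) (hX0 : (0 : Fin d → ℝ) ∈ X)
    (hXpos : ∀ x ∈ X, ∀ i, 0 ≤ x i)
    (c : (Fin d → ℝ) → ℝ)
    (hcmono : ∀ x ∈ X, ∀ y ∈ X, (∀ i, x i ≤ y i) → c x ≤ c y)
    (hc0 : c 0 = 0)
    (xbar : Fin d → ℝ) (hxbar : xbar ∈ X) (P : ℝ)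
    (hP : IsLUB {s : ℝ | ∃ α ∈ Set.Ico (0:ℝ) 1,
      s = (c xbar - c (α • xbar)) / (1 - α)} P) :
    ∃ u : (Fin d → ℝ) → ℝ, InClassC d u ∧
      (∀ x ∈ X, u x - c x ≤ u xbar - c xbar) ∧ u xbar = P := by
  have hne : (Finset.univ : Finset (Fin d)).Nonempty := by
    have : Nonempty (Fin d) := ⟨⟨0, hd⟩⟩
    exact Finset.univ_nonempty
  set f : (Fin d → ℝ) → Fin d → ℝ :=
    fun x i => if xbar i = 0 then 1 else x i / xbar i with hf
  set g : (Fin d → ℝ) → ℝ := fun x => Finset.univ.inf' hne (f x) with hg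
  set u : (Fin d → ℝ) → ℝ := fun x => P * min 1 (g x) with hu
  have hxbarpos : ∀ i, 0 ≤ xbar i := hXpos xbar hxbar
  have hcx0 : 0 ≤ c xbar := by
    have := hcmono 0 hX0 xbar hxbar (fun i => hxbarpos i)
    simpa [hc0] using this
  have hcxP : c xbar ≤ P := by
    have : c xbar ∈ {s : ℝ | ∃ α ∈ Set.Ico (0:ℝ) 1,
        s = (c xbar - c (α • xbar)) / (1 - α)} :=
      ⟨0, ⟨le_refl _, zero_lt_one⟩, by simp [hc0]⟩
    exact hP.1 this
  have hP0 : 0 ≤ P := le_trans hcx0 hcxP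
  have hfnonneg : ∀ x : Fin d → ℝ, (∀ i, 0 ≤ x i) → ∀ i, 0 ≤ f x i := by
    intro x hx i
    by_cases h : xbar i = 0
    · simp [hf, h]
    · simp only [hf, h, if_false]
      exact div_nonneg (hx i) (hxbarpos i)
  have hgnonneg : ∀ x : Fin d → ℝ, (∀ i, 0 ≤ x i) → 0 ≤ g x :=
    fun x hx => Finset.le_inf' hne _ (fun i _ => hfnonneg x hx i)
  have hgle : ∀ x : Fin d → ℝ, ∀ i, g x ≤ f x i :=
    fun x i => Finset.inf'_le _ (Finset.mem_univ i)
  have hfmono : ∀ x y : Fin d → ℝ, (∀ i, x i ≤ y i) → ∀ i, f x i ≤ f y i := by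
    intro x y hxy i
    by_cases h : xbar i = 0
    · simp [hf, h]
    · have hpos : 0 < xbar i := lt_of_le_of_ne (hxbarpos i) (Ne.symm h)
      simp only [hf, h, if_false]
      gcongr
      exact hxy i
  have hgmono : ∀ x y : Fin d → ℝ, (∀ i, x i ≤ y i) → g x ≤ g y := by
    intro x y hxy
    exact Finset.le_inf' hne _ (fun i _ => le_trans (hgle x i) (hfmono x y hxy i))
  have hgxbar : g xbar = 1 := by
    have h1 : ∀ i ∈ Finset.univ, f xbar i = 1 := by
      intro i _
      by_cases h : xbar i = 0
      · simp [hf, h]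
      · simp [hf, h, div_self h]
    calc g xbar = Finset.univ.inf' hne (fun _ : Fin d => (1:ℝ)) :=
          Finset.inf'_congr hne rfl h1
      _ = 1 := Finset.inf'_const hne 1
  have huxbar : u xbar = P := by
    simp [hu, hgxbar]
  -- affinity of f in x
  have hfaff : ∀ x y : Fin d → ℝ, ∀ t : ℝ,
      ∀ i, f (t • x + (1 - t) • y) i = t * f x i + (1 - t) * f y i := by
    intro x y t i
    by_cases h : xbar i = 0
    · simp [hf, h]
    · simp only [hf, h, if_false, Pi.add_apply, Pi.smul_apply, smul_eq_mul]
      field_simp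
  -- u belongs to class C
  have hC : InClassC d u := by
    refine ⟨?_, ?_, ?_, ?_⟩
    · -- concavity
      intro x y hx hy t ht
      obtain ⟨ht0, ht1⟩ := ht
      have h1t : 0 ≤ 1 - t := by linarith
      have hgz : t * g x + (1 - t) * g y ≤ g (t • x + (1 - t) • y) := by
        refine Finset.le_inf' hne _ (fun i _ => ?_)
        rw [hfaff x y t i]
        have := mul_le_mul_of_nonneg_left (hgle x i) ht0
        have := mul_le_mul_of_nonneg_left (hgle y i) h1t
        nlinarith [mul_le_mul_of_nonneg_left (hgle x i) ht0,
          mul_le_mul_of_nonneg_left (hgle y i) h1t]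
      have hmin : t * min 1 (g x) + (1 - t) * min 1 (g y)
          ≤ min 1 (g (t • x + (1 - t) • y)) := by
        refine le_min ?_ ?_
        · nlinarith [min_le_left (1:ℝ) (g x), min_le_left (1:ℝ) (g y)]
        · refine le_trans ?_ hgz
          nlinarith [min_le_right (1:ℝ) (g x), min_le_right (1:ℝ) (g y)]
      simp only [hu]
      calc t * (P * min 1 (g x)) + (1 - t) * (P * min 1 (g y))
          = P * (t * min 1 (g x) + (1 - t) * min 1 (g y)) := by ring
        _ ≤ P * min 1 (g (t • x + (1 - t) • y)) :=
            mul_le_mul_of_nonneg_left hmin hP0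
    · -- monotone
      intro x y hx hxy
      have := hgmono x y hxy
      simp only [hu]
      exact mul_le_mul_of_nonneg_left (min_le_min le_rfl this) hP0
    · -- nonneg
      intro x hx
      exact mul_nonneg hP0 (le_min zero_le_one (hgnonneg x hx))
    · -- u 0 = 0
      by_cases hz : ∀ i, xbar i = 0
      · -- then xbar = 0 and P = 0
        have hxbar0 : xbar = 0 := funext fun i => hz i
        have hPle : P ≤ 0 := by
          refine hP.2 (fun s hs => ?_)
          obtain ⟨α, hα, rfl⟩ := hs
          simp [hxbar0, hc0]
        have : P = 0 := le_antisymm hPle hP0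
        simp [hu, this]
      · push_neg at hz
        obtain ⟨j, hj⟩ := hz
        have h1 : g 0 ≤ 0 := by
          refine le_trans (hgle 0 j) ?_
          simp [hf, hj]
        have h2 : 0 ≤ g 0 := hgnonneg 0 (fun i => le_refl 0)
        have : g 0 = 0 := le_antisymm h1 h2
        simp [hu, this]
  -- feasibility
  refine ⟨u, hC, ?_, huxbar⟩
  intro x hx
  set β := min 1 (g x) with hβ
  have hxpos : ∀ i, 0 ≤ x i := hXpos x hx
  have hβ0 : 0 ≤ β := le_min zero_le_one (hgnonneg x hxpos)
  have hβ1 : β ≤ 1 := min_le_left _ _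
  have hβx : ∀ i, (β • xbar) i ≤ x i := by
    intro i
    simp only [Pi.smul_apply, smul_eq_mul]
    by_cases h : xbar i = 0
    · simp [h]; exact hxpos i
    · have hpos : 0 < xbar i := lt_of_le_of_ne (hxbarpos i) (Ne.symm h)
      have : β ≤ x i / xbar i := by
        refine le_trans (min_le_right _ _) ?_
        have := hgle x i
        simpa [hf, h] using this
      calc β * xbar i ≤ (x i / xbar i) * xbar i :=
            mul_le_mul_of_nonneg_right this (le_of_lt hpos)
        _ = x i := by field_simp
  have hβX : β • xbar ∈ X := by
    have := hXconv hX0 hxbar (a := 1 - β) (b := β) (by linarith) hβ0 (by ring)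
    simpa using this
  have hc1 : c (β • xbar) ≤ c x := hcmono (β • xbar) hβX x hx hβx
  have hkey : c xbar - c (β • xbar) ≤ (1 - β) * P := by
    rcases eq_or_lt_of_le hβ1 with hβeq | hβlt
    · have hone : β • xbar = xbar := by rw [hβeq, one_smul]
      rw [hone, hβeq]
      simp
    · have hmem : (c xbar - c (β • xbar)) / (1 - β) ∈
          {s : ℝ | ∃ α ∈ Set.Ico (0:ℝ) 1,
            s = (c xbar - c (α • xbar)) / (1 - α)} :=
        ⟨β, ⟨hβ0, hβlt⟩, rfl⟩
      have hle := hP.1 hmem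
      have h1β : 0 < 1 - β := by linarith
      calc c xbar - c (β • xbar)
          = ((c xbar - c (β • xbar)) / (1 - β)) * (1 - β) := by field_simp
        _ ≤ P * (1 - β) := mul_le_mul_of_nonneg_right hle (le_of_lt h1β)
        _ = (1 - β) * P := by ring
  have hux : u x = β * P := by simp [hu, hβ]; ring
  rw [hux, huxbar]
  linarith

/-- core of Theorems 1 and 5: the buyer's equilibrium surplus,
i.e. the supremum of `v(x̄) − u(x̄)` over all feasible pairs `(u, x̄)` with
`u ∈ C`, `x̄ ∈ X` and `u(x̄) − c(x̄) ≥ u(x) − c(x)` for all `x ∈ X`, equals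
`sup_{x̄ ∈ X} [v(x̄) − p̄_c(x̄)]` where
`p̄_c(x̄) = sup_{α ∈ [0,1)} (c(x̄) − c(α·x̄))/(1 − α)` (assumed finite). -/
theorem stmt5 (d : ℕ) (hd : 1 ≤ d)
    (X : Set (Fin d → ℝ)) (hXconv : Convex ℝ X) (hX0 : (0 : Fin d → ℝ) ∈ X)
    (hXpos : ∀ x ∈ X, ∀ i, 0 ≤ x i)
    (c : (Fin d → ℝ) → ℝ)
    (hcmono : ∀ x ∈ X, ∀ y ∈ X, (∀ i, x i ≤ y i) → c x ≤ c y)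
    (hc0 : c 0 = 0)
    (v : (Fin d → ℝ) → ℝ)
    (pbar : (Fin d → ℝ) → ℝ)
    (hpbar : ∀ xbar ∈ X, IsLUB {s : ℝ | ∃ α ∈ Set.Ico (0:ℝ) 1,
      s = (c xbar - c (α • xbar)) / (1 - α)} (pbar xbar)) :
    sSup {s : ℝ | ∃ u : (Fin d → ℝ) → ℝ, ∃ xbar ∈ X, InClassC d u ∧
        (∀ x ∈ X, u x - c x ≤ u xbar - c xbar) ∧ s = v xbar - u xbar}
      = sSup {s : ℝ | ∃ xbar ∈ X, s = v xbar - pbar xbar} := by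
  set S1 := {s : ℝ | ∃ u : (Fin d → ℝ) → ℝ, ∃ xbar ∈ X, InClassC d u ∧
      (∀ x ∈ X, u x - c x ≤ u xbar - c xbar) ∧ s = v xbar - u xbar} with hS1
  set S2 := {s : ℝ | ∃ xbar ∈ X, s = v xbar - pbar xbar} with hS2
  -- S2 ⊆ S1
  have hsub : S2 ⊆ S1 := by
    intro s hs
    obtain ⟨xbar, hxbar, rfl⟩ := hs
    obtain ⟨u, hC, hfeas, huxbar⟩ := exists_u d hd X hXconv hX0 hXpos c hcmono hc0
      xbar hxbar (pbar xbar) (hpbar xbar hxbar)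
    exact ⟨u, xbar, hxbar, hC, hfeas, by rw [huxbar]⟩
  -- every element of S1 is dominated by an element of S2
  have hdom : ∀ s ∈ S1, ∃ t ∈ S2, s ≤ t := by
    intro s hs
    obtain ⟨u, xbar, hxbar, hC, hfeas, rfl⟩ := hs
    refine ⟨v xbar - pbar xbar, ⟨xbar, hxbar, rfl⟩, ?_⟩
    have hpb : pbar xbar ≤ u xbar := by
      refine (hpbar xbar hxbar).2 (fun t ht => ?_)
      obtain ⟨α, ⟨hα0, hα1⟩, rfl⟩ := ht
      have h1α : 0 < 1 - α := by linarith
      have hαmem : α • xbar ∈ X := by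
        have := hXconv hX0 hxbar (a := 1 - α) (b := α) (le_of_lt h1α) hα0
          (by ring)
        simpa using this
      have hconc : α * u xbar ≤ u (α • xbar) := by
        have := hC.1 xbar 0 (hXpos xbar hxbar) (fun i => le_refl 0) α
          ⟨hα0, le_of_lt (by linarith)⟩
        simpa [hC.2.2.2] using this
      have hfeas' := hfeas (α • xbar) hαmem
      rw [div_le_iff₀ h1α]
      nlinarith
    linarith
  have hS2ne : S2.Nonempty := ⟨v 0 - pbar 0, 0, hX0, rfl⟩
  have hS1ne : S1.Nonempty := hS2ne.mono hsub
  by_cases hbdd : BddAbove S2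
  · have hbdd1 : BddAbove S1 := by
      obtain ⟨M, hM⟩ := hbdd
      refine ⟨M, fun s hs => ?_⟩
      obtain ⟨t, ht, hst⟩ := hdom s hs
      exact le_trans hst (hM ht)
    refine le_antisymm ?_ (csSup_le_csSup hbdd1 hS2ne hsub)
    refine csSup_le hS1ne (fun s hs => ?_)
    obtain ⟨t, ht, hst⟩ := hdom s hs
    exact le_trans hst (le_csSup hbdd ht)
  · have hbdd1 : ¬ BddAbove S1 := fun h => hbdd (h.mono hsub)
    rw [Real.sSup_of_not_bddAbove hbdd1, Real.sSup_of_not_bddAbove hbdd]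
end

section
/- Let d ≥ 1, let X ⊆ ℝ^d₊ be a convex set containing 0, let c : ℝ^d → ℝ be convex, differentiable, monotone non-decreasing on X with respect to the coordinatewise order, with c(0) = 0, and let v : X → ℝ. Call a pair (u, x̄) with u ∈ C and x̄ ∈ X feasible if u(x̄) − c(x̄) ≥ u(x) − c(x) for all x ∈ X. Then sup{ v(x̄) − u(x̄) : (u, x̄) feasible } = sup{ v(x) − ⟨∇c(x), x⟩ : x ∈ X }. Moreover, if x* ∈ X with all coordinates strictly positive attains the right-hand supremum, then the pair consisting of the Leontief-type function u*(x) = p*·min{x₁/x*₁, …, x_d/x*_d, 1} with p* = ⟨∇c(x*), x*⟩ together with x* is feasible and attains the left-hand supremum; the buyer pays p*, his surplus is v(x*) − ⟨∇c(x*), x*⟩, and the seller's revenue p* − c(x*) equals the Bregman divergence D_c(0, x*) = ⟨∇c(x*), x*⟩ − c(x*), which is nonnegative. -/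
open Set

lemma ConvexOn.le_sub_of_hasFDerivAt {E : Type*} [NormedAddCommGroup E] [NormedSpace ℝ E]
    {s : Set E} {f : E → ℝ} {f' : E →L[ℝ] ℝ} {x y : E} (hf : ConvexOn ℝ s f)
    (hx : x ∈ s) (hy : y ∈ s) (hfx : HasFDerivAt f f' x) :
    f' (y - x) ≤ f y - f x := by
  have hg : HasDerivAt (f ∘ AffineMap.lineMap (k := ℝ) x y) (f' (y - x)) 0 := by
    refine HasFDerivAt.comp_hasDerivAt (0 : ℝ) ?_ AffineMap.hasDerivAt_lineMap
    simpa using hfx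
  have h := (hf.comp_affineMap (AffineMap.lineMap x y)).le_slope_of_hasDerivAt
    (by simpa using hx) (by simpa using hy) zero_lt_one hg
  simpa [slope_def_field] using h

lemma ConvexOn.le_apply_self_of_hasFDerivAt {E : Type*} [NormedAddCommGroup E]
    [NormedSpace ℝ E] {s : Set E} {f : E → ℝ} {f' : E →L[ℝ] ℝ} {x : E} (hf : ConvexOn ℝ s f)
    (h0 : (0 : E) ∈ s) (hx : x ∈ s) (hf0 : f 0 = 0) (hfx : HasFDerivAt f f' x) :
    f x ≤ f' x := by
  have h := hf.le_sub_of_hasFDerivAt hx h0 hfx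
  rw [zero_sub, map_neg, hf0] at h
  linarith

lemma HasDerivAt.nonneg_of_isMaxOn_Icc {φ : ℝ → ℝ} {φ' a b : ℝ} (hab : a < b)
    (hmax : IsMaxOn φ (Icc a b) b) (hφ : HasDerivAt φ φ' b) : 0 ≤ φ' := by
  have hcone : a - b ∈ posTangentConeAt (Icc a b) b :=
    sub_mem_posTangentConeAt_of_segment_subset
      ((convex_Icc a b).segment_subset (right_mem_Icc.2 hab.le) (left_mem_Icc.2 hab.le))
  have h := hmax.localize.hasFDerivWithinAt_nonpos hφ.hasFDerivAt.hasFDerivWithinAt hcone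
  simp only [ContinuousLinearMap.toSpanSingleton_apply, smul_eq_mul] at h
  exact nonneg_of_mul_nonpos_right h (sub_neg.2 hab)

section Leontief

variable {ι : Type*} {x y z : ι → ℝ}

/-- Coordinates with `x i = 0` contribute `1`, i.e. no constraint, instead of the junk
value `y i / 0 = 0`. -/
noncomputable def leontief (x y : ι → ℝ) : ℝ :=
  min (⨅ i, if x i = 0 then 1 else y i / x i) 1

lemma leontief_le_one (x y : ι → ℝ) : leontief x y ≤ 1 := min_le_right _ _

lemma leontief_of_pos (hx : ∀ i, 0 < x i) (y : ι → ℝ) :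
    leontief x y = min (⨅ i, y i / x i) 1 := by
  simp only [leontief, (hx _).ne', if_false]

lemma le_leontief [Nonempty ι] {m : ℝ} (hm : m ≤ 1) (h : ∀ i, x i ≠ 0 → m ≤ y i / x i) :
    m ≤ leontief x y := by
  refine le_min (le_ciInf fun i => ?_) hm
  split_ifs with hi
  exacts [hm, h i hi]

lemma leontief_le_div [Finite ι] {i : ι} (hi : x i ≠ 0) : leontief x y ≤ y i / x i := by
  have h : leontief x y ≤ if x i = 0 then 1 else y i / x i :=
    (min_le_left _ _).trans (ciInf_le (finite_range _).bddBelow i)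
  rwa [if_neg hi] at h

lemma leontief_mul_le [Finite ι] (hx : ∀ i, 0 ≤ x i) (hy : ∀ i, 0 ≤ y i) (i : ι) :
    leontief x y * x i ≤ y i := by
  rcases (hx i).eq_or_lt with h | h
  · simpa [← h] using hy i
  · exact (le_div_iff₀ h).1 (leontief_le_div h.ne')

lemma leontief_nonneg [Nonempty ι] (hx : ∀ i, 0 ≤ x i) (hy : ∀ i, 0 ≤ y i) :
    0 ≤ leontief x y :=
  le_leontief zero_le_one fun i _ => div_nonneg (hy i) (hx i)

lemma leontief_self [Nonempty ι] : leontief x x = 1 :=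
  le_antisymm (leontief_le_one x x) (le_leontief le_rfl fun _ hi => (div_self hi).ge)

lemma leontief_zero_right [Finite ι] [Nonempty ι] (hx : ∀ i, 0 ≤ x i) (h : x ≠ 0) :
    leontief x 0 = 0 := by
  obtain ⟨i, hi⟩ := Function.ne_iff.1 h
  refine le_antisymm ?_ (leontief_nonneg hx fun _ => le_rfl)
  simpa using leontief_le_div (y := 0) hi

lemma leontief_mono [Finite ι] [Nonempty ι] (hx : ∀ i, 0 ≤ x i) (hyz : ∀ i, y i ≤ z i) :
    leontief x y ≤ leontief x z :=
  le_leontief (leontief_le_one x y) fun _ hi =>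
    (leontief_le_div hi).trans (div_le_div_of_nonneg_right (hyz _) (hx _))

lemma leontief_concave [Finite ι] [Nonempty ι] {t : ℝ} (ht : t ∈ Icc (0 : ℝ) 1) :
    t * leontief x y + (1 - t) * leontief x z ≤ leontief x (t • y + (1 - t) • z) := by
  have hy := leontief_le_one x y
  have hz := leontief_le_one x z
  obtain ⟨ht0, ht1⟩ := ht
  refine le_leontief (by nlinarith) fun i hi => ?_
  have hyi := leontief_le_div (y := y) hi
  have hzi := leontief_le_div (y := z) hi
  have hcomb : (t • y + (1 - t) • z) i / x i = t * (y i / x i) + (1 - t) * (z i / x i) := by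
    simp only [Pi.add_apply, Pi.smul_apply, smul_eq_mul]
    ring
  rw [hcomb]
  nlinarith

end Leontief

section Market

variable {d : ℕ} {X : Set (Fin d → ℝ)} {c u : (Fin d → ℝ) → ℝ} {L : (Fin d → ℝ) →L[ℝ] ℝ}

lemma InClassC.mul_le_apply_smul (hu : InClassC d u) {x : Fin d → ℝ} (hx : ∀ i, 0 ≤ x i)
    {t : ℝ} (ht : t ∈ Icc (0 : ℝ) 1) : t * u x ≤ u (t • x) := by
  simpa [hu.2.2.2] using hu.1 x 0 hx (fun _ => le_rfl) t ht

lemma inClassC_mul_leontief [Nonempty (Fin d)] {x : Fin d → ℝ} {p : ℝ} (hx : ∀ i, 0 ≤ x i)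
    (hp : 0 ≤ p) (hp0 : x = 0 → p = 0) : InClassC d (fun y => p * leontief x y) := by
  refine ⟨fun y z _ _ t ht => ?_, fun y z _ hyz => mul_le_mul_of_nonneg_left
    (leontief_mono hx hyz) hp, fun y hy => mul_nonneg hp (leontief_nonneg hx hy), ?_⟩
  · have := mul_le_mul_of_nonneg_left (leontief_concave (x := x) (y := y) (z := z) ht) hp
    linarith
  · by_cases h : x = 0
    · simp [hp0 h]
    · simp [leontief_zero_right hx h]

lemma leontief_feasible [Nonempty (Fin d)] (hXconv : Convex ℝ X) (hX0 : 0 ∈ X)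
    (hXpos : ∀ x ∈ X, ∀ i, 0 ≤ x i) (hcconv : ConvexOn ℝ X c)
    (hcmono : ∀ x ∈ X, ∀ y ∈ X, (∀ i, x i ≤ y i) → c x ≤ c y)
    {x y : Fin d → ℝ} (hx : x ∈ X) (hy : y ∈ X) (hc : HasFDerivAt c L x) :
    L x * leontief x y - c y ≤ L x * leontief x x - c x := by
  rw [leontief_self, mul_one]
  set m := leontief x y
  have hm : m ∈ Icc (0 : ℝ) 1 :=
    ⟨leontief_nonneg (hXpos x hx) (hXpos y hy), leontief_le_one x y⟩
  have hmx : m • x ∈ X := hXconv.smul_mem_of_zero_mem hX0 hx hm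
  have hcy : c (m • x) ≤ c y := hcmono _ hmx y hy fun i => by
    simpa [mul_comm] using leontief_mul_le (hXpos x hx) (hXpos y hy) i
  have hgrad := hcconv.le_sub_of_hasFDerivAt hx hmx hc
  rw [map_sub, map_smul, smul_eq_mul] at hgrad
  linarith

lemma HasFDerivAt.apply_self_le_of_feasible {xbar : Fin d → ℝ} (hc : HasFDerivAt c L xbar)
    (hXconv : Convex ℝ X) (hX0 : 0 ∈ X) (hxbar : xbar ∈ X) (hxbar_nonneg : ∀ i, 0 ≤ xbar i)
    (hu : InClassC d u) (hfeas : ∀ x ∈ X, u x - c x ≤ u xbar - c xbar) :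
    L xbar ≤ u xbar := by
  have hφ : HasDerivAt (fun t : ℝ => t * u xbar - c (t • xbar)) (u xbar - L xbar) 1 := by
    have hline : HasDerivAt (fun t : ℝ => t • xbar) xbar 1 := by
      simpa using (hasDerivAt_id (1 : ℝ)).smul_const xbar
    have hc' : HasFDerivAt c L ((1 : ℝ) • xbar) := by rwa [one_smul]
    exact (hasDerivAt_mul_const (u xbar)).sub (hc'.comp_hasDerivAt 1 hline)
  have hmax : IsMaxOn (fun t : ℝ => t * u xbar - c (t • xbar)) (Icc 0 1) 1 :=
    isMaxOn_iff.2 fun t ht => by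
      have hfeas_t := hfeas _ (hXconv.smul_mem_of_zero_mem hX0 hxbar ht)
      have hconc := hu.mul_le_apply_smul hxbar_nonneg ht
      simp only [one_mul, one_smul]
      linarith
  linarith [hφ.nonneg_of_isMaxOn_Icc zero_lt_one hmax]

end Market

/-- Theorem 2: convex differentiable production cost. The buyer's
equilibrium surplus equals `sup_{x ∈ X} [v(x) − ⟨∇c(x), x⟩]` (here `Dc x` is the
derivative of `c` at `x`, so `⟨∇c(x), x⟩ = Dc x x`). Moreover if `x*`, strictly
positive, attains the right-hand supremum, then the Leontief-type function
`u*(x) = p*·min{xᵢ/x*ᵢ, 1}` with `p* = Dc x* x*` forms a feasible pair with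
`x*` attaining the left-hand supremum; the buyer pays `p* = u*(x*)`, his surplus
is `v(x*) − p*`, and the seller's revenue `p* − c(x*)` equals the Bregman
divergence `D_c(0, x*) = ⟨∇c(x*), x*⟩ − c(x*)`, which is nonnegative. -/
theorem stmt6 (d : ℕ) (hd : 1 ≤ d)
    (X : Set (Fin d → ℝ)) (hXconv : Convex ℝ X) (hX0 : (0 : Fin d → ℝ) ∈ X)
    (hXpos : ∀ x ∈ X, ∀ i, 0 ≤ x i)
    (c : (Fin d → ℝ) → ℝ) (hcconv : ConvexOn ℝ Set.univ c)
    (Dc : (Fin d → ℝ) → (Fin d → ℝ) →L[ℝ] ℝ)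
    (hDc : ∀ x : Fin d → ℝ, HasFDerivAt c (Dc x) x)
    (hcmono : ∀ x ∈ X, ∀ y ∈ X, (∀ i, x i ≤ y i) → c x ≤ c y)
    (hc0 : c 0 = 0)
    (v : (Fin d → ℝ) → ℝ) :
    sSup {s : ℝ | ∃ u : (Fin d → ℝ) → ℝ, ∃ xbar ∈ X, InClassC d u ∧
        (∀ x ∈ X, u x - c x ≤ u xbar - c xbar) ∧ s = v xbar - u xbar}
      = sSup {s : ℝ | ∃ x ∈ X, s = v x - Dc x x} ∧
    (∀ xstar ∈ X, (∀ i, 0 < xstar i) →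
      (∀ x ∈ X, v x - Dc x x ≤ v xstar - Dc xstar xstar) →
      ∀ ustar : (Fin d → ℝ) → ℝ,
        (∀ x : Fin d → ℝ,
          ustar x = (Dc xstar xstar) * min (⨅ i, x i / xstar i) 1) →
        InClassC d ustar ∧
        (∀ x ∈ X, ustar x - c x ≤ ustar xstar - c xstar) ∧
        ustar xstar = Dc xstar xstar ∧
        v xstar - ustar xstar
          = sSup {s : ℝ | ∃ u : (Fin d → ℝ) → ℝ, ∃ xbar ∈ X, InClassC d u ∧
              (∀ x ∈ X, u x - c x ≤ u xbar - c xbar) ∧ s = v xbar - u xbar} ∧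
        ustar xstar - c xstar = Dc xstar xstar - c xstar ∧
        0 ≤ Dc xstar xstar - c xstar) := by
  have : Nonempty (Fin d) := ⟨⟨0, hd⟩⟩
  have hcX : ConvexOn ℝ X c := hcconv.subset (subset_univ X) hXconv
  have hc_le : ∀ x ∈ X, c x ≤ Dc x x := fun x hx =>
    hcX.le_apply_self_of_hasFDerivAt hX0 hx hc0 (hDc x)
  have hDc_nonneg : ∀ x ∈ X, 0 ≤ Dc x x := fun x hx =>
    (hc0 ▸ hcmono 0 hX0 x hx (hXpos x hx)).trans (hc_le x hx)
  have hInC : ∀ x ∈ X, InClassC d (fun y => Dc x x * leontief x y) := fun x hx =>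
    inClassC_mul_leontief (hXpos x hx) (hDc_nonneg x hx) fun h => by simp [h]
  have hfeas : ∀ x ∈ X, ∀ y ∈ X, Dc x x * leontief x y - c y ≤ Dc x x * leontief x x - c x :=
    fun x hx y hy => leontief_feasible hXconv hX0 hXpos hcX hcmono hx hy (hDc x)
  have hsup : sSup {s : ℝ | ∃ u : (Fin d → ℝ) → ℝ, ∃ xbar ∈ X, InClassC d u ∧
      (∀ x ∈ X, u x - c x ≤ u xbar - c xbar) ∧ s = v xbar - u xbar}
      = sSup {s : ℝ | ∃ x ∈ X, s = v x - Dc x x} := by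
    refine csSup_eq_csSup_of_forall_exists_le ?_ ?_
    · rintro _ ⟨u, xbar, hxbar, hu, hfeas, rfl⟩
      exact ⟨_, ⟨xbar, hxbar, rfl⟩, sub_le_sub_left
        ((hDc xbar).apply_self_le_of_feasible hXconv hX0 hxbar (hXpos xbar hxbar) hu hfeas) _⟩
    · rintro _ ⟨x, hx, rfl⟩
      exact ⟨_, ⟨_, x, hx, hInC x hx, hfeas x hx, rfl⟩, by simp [leontief_self]⟩
  refine ⟨hsup, fun xstar hxstar hpos hopt ustar hustar => ?_⟩
  obtain rfl : ustar = fun y => Dc xstar xstar * leontief xstar y :=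
    funext fun y => by rw [hustar, leontief_of_pos hpos]
  have hgreatest : IsGreatest {s : ℝ | ∃ x ∈ X, s = v x - Dc x x} (v xstar - Dc xstar xstar) :=
    ⟨⟨xstar, hxstar, rfl⟩, by rintro _ ⟨x, hx, rfl⟩; exact hopt x hx⟩
  have hself : Dc xstar xstar * leontief xstar xstar = Dc xstar xstar := by
    rw [leontief_self, mul_one]
  exact ⟨hInC xstar hxstar, hfeas xstar hxstar, hself,
    by rw [hsup, hgreatest.csSup_eq]; exact congrArg (v xstar - ·) hself,
    congrArg (· - c xstar) hself, sub_nonneg.2 (hc_le xstar hxstar)⟩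
end

section
/- Let d ≥ 1, let X ⊆ ℝ^d₊ be a convex set containing 0, let c : ℝ^d₊ → ℝ be concave, monotone non-decreasing with respect to the coordinatewise order, with c(0) = 0, and let v : X → ℝ. Call a pair (u, x̄) with u ∈ C and x̄ ∈ X feasible if u(x̄) − c(x̄) ≥ u(x) − c(x) for all x ∈ X. Then sup{ v(x̄) − u(x̄) : (u, x̄) feasible } = sup{ v(x) − c(x) : x ∈ X }; in other words, the buyer can extract the maximum possible total surplus. Moreover, if x* ∈ X with all coordinates strictly positive attains the right-hand supremum, then the pair consisting of the Leontief-type function u*(x) = p*·min{x₁/x*₁, …, x_d/x*_d, 1} with p* = c(x*) together with x* is feasible and attains the left-hand supremum, and the seller's revenue u*(x*) − c(x*) is 0. -/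
/-!
Against any bundle `x` the buyer can offer the Leontief function `y ↦ c(x) · min(minᵢ yᵢ/xᵢ, 1)`.
It lies in `C`, touches `c` at `x`, and lies below `c` on the orthant: for
`t = min(minᵢ yᵢ/xᵢ, 1)`, concavity with `c(0) = 0` and monotonicity give
`t · c(x) ≤ c(t • x) ≤ c(y)`. So the seller's profit is `0` at `x` and nonpositive elsewhere, and
the buyer gets `v(x) − c(x)`. Conversely, in any feasible pair the seller earns at least the
profit `u(0) − c(0) = 0` of `0 ∈ X`, so the buyer never gets more than `v − c`.
-/

open Set

theorem ConcaveOn.ciInf {E ι : Type*} [AddCommMonoid E] [Module ℝ E] [Finite ι] [Nonempty ι]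
    {s : Set E} {f : ι → E → ℝ} (hf : ∀ i, ConcaveOn ℝ s (f i)) :
    ConcaveOn ℝ s fun x => ⨅ i, f i x := by
  refine ⟨(hf (Classical.arbitrary ι)).1, fun x hx y hy a b ha hb hab => le_ciInf fun i => ?_⟩
  calc a • (⨅ i, f i x) + b • ⨅ i, f i y ≤ a • f i x + b • f i y := by
        gcongr <;> exact ciInf_le (finite_range _).bddBelow i
    _ ≤ f i (a • x + b • y) := (hf i).2 hx hy ha hb hab

theorem ConcaveOn.mul_le_map_smul {E : Type*} [AddCommGroup E] [Module ℝ E] {s : Set E}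
    {f : E → ℝ} (hf : ConcaveOn ℝ s f) (hs : (0 : E) ∈ s) (hf0 : f 0 = 0) {x : E} (hx : x ∈ s)
    {t : ℝ} (ht₀ : 0 ≤ t) (ht₁ : t ≤ 1) : t * f x ≤ f (t • x) := by
  simpa [hf0] using hf.2 hx hs ht₀ (sub_nonneg.2 ht₁) (add_sub_cancel t 1)

theorem concaveOn_Ici_zero_iff {ι : Type*} {f : (ι → ℝ) → ℝ} :
    ConcaveOn ℝ (Ici 0) f ↔
      ∀ x y : ι → ℝ, (∀ i, 0 ≤ x i) → (∀ i, 0 ≤ y i) →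
        ∀ t ∈ Icc (0:ℝ) 1, t * f x + (1 - t) * f y ≤ f (t • x + (1 - t) • y) := by
  refine ⟨fun hf x y hx hy t ht => hf.2 hx hy ht.1 (sub_nonneg.2 ht.2) (add_sub_cancel t 1),
    fun hf => ⟨convex_Ici 0, fun x hx y hy a b ha hb hab => ?_⟩⟩
  obtain rfl : b = 1 - a := by linarith
  exact hf x y hx hy a ⟨ha, by linarith⟩

theorem inClassC_of_concaveOn {d : ℕ} {u : (Fin d → ℝ) → ℝ} (hconc : ConcaveOn ℝ (Ici 0) u)
    (hmono : MonotoneOn u (Ici 0)) (h0 : u 0 = 0) : InClassC d u :=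
  ⟨concaveOn_Ici_zero_iff.1 hconc,
    fun _ _ hx hxy => hmono hx (fun i => (hx i).trans (hxy i)) hxy,
    fun _ hx => h0 ▸ hmono self_mem_Ici hx hx, h0⟩

section Leontief

variable {ι : Type*}

/-- For `x, y ≥ 0`, the largest `t ≤ 1` with `t • x ≤ y`. Coordinates with `xᵢ = 0` impose no
constraint, so they get the ratio `1` rather than the junk value `yᵢ / 0 = 0`. -/
noncomputable def leontiefRatio (x y : ι → ℝ) : ℝ :=
  min (⨅ i, if x i = 0 then 1 else y i / x i) 1

theorem leontiefRatio_of_pos {x : ι → ℝ} (hx : ∀ i, 0 < x i) (y : ι → ℝ) :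
    leontiefRatio x y = min (⨅ i, y i / x i) 1 := by
  simp only [leontiefRatio, (hx _).ne', if_false]

theorem leontiefRatio_self [Nonempty ι] (x : ι → ℝ) : leontiefRatio x x = 1 := by
  simp +contextual [leontiefRatio, div_self]

theorem leontiefRatio_nonneg [Nonempty ι] {x y : ι → ℝ} (hx : 0 ≤ x) (hy : 0 ≤ y) :
    0 ≤ leontiefRatio x y :=
  le_min (le_ciInf fun i => by split_ifs; exacts [zero_le_one, div_nonneg (hy i) (hx i)])
    zero_le_one

theorem leontiefRatio_le_div [Finite ι] {x : ι → ℝ} (y : ι → ℝ) {i : ι} (hi : x i ≠ 0) :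
    leontiefRatio x y ≤ y i / x i :=
  (min_le_left _ _).trans <| by
    simpa [hi] using ciInf_le (finite_range fun i => if x i = 0 then 1 else y i / x i).bddBelow i

theorem leontiefRatio_zero_right [Finite ι] [Nonempty ι] {x : ι → ℝ} (hx : x ≠ 0) :
    leontiefRatio x 0 = 0 := by
  obtain ⟨i, hi⟩ := Function.ne_iff.1 hx
  refine le_antisymm (by simpa using leontiefRatio_le_div 0 hi)
    (le_min (le_ciInf fun j => ?_) zero_le_one)
  split_ifs <;> simp

theorem leontiefRatio_smul_le [Finite ι] {x y : ι → ℝ} (hx : 0 ≤ x) (hy : 0 ≤ y) :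
    leontiefRatio x y • x ≤ y := by
  intro i
  rcases (hx i).eq_or_lt with hi | hi
  · simpa [← hi] using hy i
  · simpa using (le_div_iff₀ hi).1 (leontiefRatio_le_div y hi.ne')

theorem monotone_leontiefRatio [Finite ι] {x : ι → ℝ} (hx : 0 ≤ x) :
    Monotone (leontiefRatio x) :=
  fun y z hyz => min_le_min_right 1 <| ciInf_mono (finite_range _).bddBelow fun i => by
    split_ifs
    · rfl
    · exact div_le_div_of_nonneg_right (hyz i) (hx i)

theorem concaveOn_leontiefRatio [Finite ι] [Nonempty ι] (x : ι → ℝ) :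
    ConcaveOn ℝ univ (leontiefRatio x) := by
  refine (ConcaveOn.ciInf fun i => ?_).inf (concaveOn_const 1 convex_univ)
  split_ifs
  · exact concaveOn_const 1 convex_univ
  · exact ((LinearMap.proj i).smulRight ((x i)⁻¹ : ℝ) |>.concaveOn convex_univ).congr
      fun y _ => by simp [div_eq_mul_inv]

theorem mul_leontiefRatio_le [Finite ι] [Nonempty ι] {c : (ι → ℝ) → ℝ}
    (hc : ConcaveOn ℝ (Ici 0) c) (hcm : MonotoneOn c (Ici 0)) (hc0 : c 0 = 0) {x y : ι → ℝ}
    (hx : 0 ≤ x) (hy : 0 ≤ y) : c x * leontiefRatio x y ≤ c y := by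
  have ht₀ := leontiefRatio_nonneg hx hy
  calc c x * leontiefRatio x y = leontiefRatio x y * c x := mul_comm _ _
    _ ≤ c (leontiefRatio x y • x) :=
      hc.mul_le_map_smul self_mem_Ici hc0 hx ht₀ (min_le_right _ _)
    _ ≤ c y := hcm (smul_nonneg ht₀ hx) hy (leontiefRatio_smul_le hx hy)

end Leontief

theorem inClassC_mul_leontiefRatio {d : ℕ} [Nonempty (Fin d)] {x : Fin d → ℝ} {p : ℝ}
    (hx : 0 ≤ x) (hp : 0 ≤ p) (hp0 : x = 0 → p = 0) :
    InClassC d fun y => p * leontiefRatio x y := by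
  refine inClassC_of_concaveOn (((concaveOn_leontiefRatio x).subset (subset_univ _)
    (convex_Ici 0)).smul hp) (((monotone_leontiefRatio hx).const_mul hp).monotoneOn _) ?_
  rcases eq_or_ne x 0 with rfl | hx0
  · simp [hp0 rfl]
  · simp [leontiefRatio_zero_right hx0]

theorem leontief_feasible_s7 {d : ℕ} [Nonempty (Fin d)] {X : Set (Fin d → ℝ)}
    (hX : ∀ x ∈ X, 0 ≤ x) {c : (Fin d → ℝ) → ℝ} (hc : ConcaveOn ℝ (Ici 0) c)
    (hcm : MonotoneOn c (Ici 0)) (hc0 : c 0 = 0) {x : Fin d → ℝ} (hx : x ∈ X) :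
    InClassC d (fun y => c x * leontiefRatio x y) ∧
      ∀ y ∈ X, c x * leontiefRatio x y - c y ≤ c x * leontiefRatio x x - c x := by
  refine ⟨inClassC_mul_leontiefRatio (hX x hx) (hc0 ▸ hcm self_mem_Ici (hX x hx) (hX x hx))
    fun h => h ▸ hc0, fun y hy => ?_⟩
  rw [leontiefRatio_self, mul_one, sub_self, sub_nonpos]
  exact mul_leontiefRatio_le hc hcm hc0 (hX x hx) (hX y hy)

theorem stmt7_general (d : ℕ) (hd : 1 ≤ d)
    (X : Set (Fin d → ℝ)) (hX0 : (0 : Fin d → ℝ) ∈ X)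
    (hXpos : ∀ x ∈ X, ∀ i, 0 ≤ x i)
    (c : (Fin d → ℝ) → ℝ)
    (hcconc : ∀ x y : Fin d → ℝ, (∀ i, 0 ≤ x i) → (∀ i, 0 ≤ y i) →
      ∀ t ∈ Set.Icc (0:ℝ) 1,
        t * c x + (1 - t) * c y ≤ c (t • x + (1 - t) • y))
    (hcmono : ∀ x y : Fin d → ℝ, (∀ i, 0 ≤ x i) → (∀ i, x i ≤ y i) → c x ≤ c y)
    (hc0 : c 0 = 0)
    (v : (Fin d → ℝ) → ℝ) :
    sSup {s : ℝ | ∃ u : (Fin d → ℝ) → ℝ, ∃ xbar ∈ X, InClassC d u ∧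
        (∀ x ∈ X, u x - c x ≤ u xbar - c xbar) ∧ s = v xbar - u xbar}
      = sSup {s : ℝ | ∃ x ∈ X, s = v x - c x} ∧
    (∀ xstar ∈ X, (∀ i, 0 < xstar i) →
      (∀ x ∈ X, v x - c x ≤ v xstar - c xstar) →
      ∀ ustar : (Fin d → ℝ) → ℝ,
        (∀ x : Fin d → ℝ,
          ustar x = (c xstar) * min (⨅ i, x i / xstar i) 1) →
        InClassC d ustar ∧
        (∀ x ∈ X, ustar x - c x ≤ ustar xstar - c xstar) ∧
        v xstar - ustar xstar
          = sSup {s : ℝ | ∃ u : (Fin d → ℝ) → ℝ, ∃ xbar ∈ X, InClassC d u ∧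
              (∀ x ∈ X, u x - c x ≤ u xbar - c xbar) ∧ s = v xbar - u xbar} ∧
        ustar xstar - c xstar = 0) := by
  have : Nonempty (Fin d) := ⟨⟨0, hd⟩⟩
  have hc : ConcaveOn ℝ (Ici 0) c := concaveOn_Ici_zero_iff.2 hcconc
  have hcm : MonotoneOn c (Ici 0) := fun x hx y _ hxy => hcmono x y hx hxy
  have hsup : sSup {s : ℝ | ∃ u : (Fin d → ℝ) → ℝ, ∃ xbar ∈ X, InClassC d u ∧
      (∀ x ∈ X, u x - c x ≤ u xbar - c xbar) ∧ s = v xbar - u xbar}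
        = sSup {s : ℝ | ∃ x ∈ X, s = v x - c x} := by
    refine csSup_eq_csSup_of_forall_exists_le ?_ ?_
    · rintro _ ⟨u, xbar, hxbar, hu, hfeas, rfl⟩
      have no_trade := hfeas 0 hX0
      rw [hu.2.2.2, hc0] at no_trade
      exact ⟨_, ⟨xbar, hxbar, rfl⟩, by linarith⟩
    · rintro _ ⟨x, hx, rfl⟩
      obtain ⟨hu, hfeas⟩ := leontief_feasible_s7 hXpos hc hcm hc0 hx
      exact ⟨_, ⟨_, x, hx, hu, hfeas, rfl⟩, by simp [leontiefRatio_self]⟩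
  refine ⟨hsup, fun xstar hxstar hpos hmax ustar hustar => ?_⟩
  obtain rfl : ustar = fun y => c xstar * leontiefRatio xstar y :=
    funext fun y => by rw [hustar, leontiefRatio_of_pos hpos]
  obtain ⟨hu, hfeas⟩ := leontief_feasible_s7 hXpos hc hcm hc0 hxstar
  have hmax_sup : sSup {s : ℝ | ∃ x ∈ X, s = v x - c x} = v xstar - c xstar :=
    IsGreatest.csSup_eq ⟨⟨xstar, hxstar, rfl⟩, by rintro _ ⟨x, hx, rfl⟩; exact hmax x hx⟩
  simp only [leontiefRatio_self, mul_one] at hfeas ⊢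
  exact ⟨hu, hfeas, by rw [hsup, hmax_sup], sub_self _⟩

/-- Theorem 3: concave production cost. The buyer's equilibrium
surplus equals the maximum possible total surplus `sup_{x ∈ X} [v(x) − c(x)]`.
Moreover if `x*`, strictly positive, attains the right-hand supremum, then the
Leontief-type function `u*(x) = p*·min{xᵢ/x*ᵢ, 1}` with `p* = c(x*)` forms a
feasible pair with `x*` attaining the left-hand supremum, and the seller's
revenue `u*(x*) − c(x*)` is `0`. -/
theorem stmt7 (d : ℕ) (hd : 1 ≤ d)
    (X : Set (Fin d → ℝ)) (hXconv : Convex ℝ X) (hX0 : (0 : Fin d → ℝ) ∈ X)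
    (hXpos : ∀ x ∈ X, ∀ i, 0 ≤ x i)
    (c : (Fin d → ℝ) → ℝ)
    (hcconc : ∀ x y : Fin d → ℝ, (∀ i, 0 ≤ x i) → (∀ i, 0 ≤ y i) →
      ∀ t ∈ Set.Icc (0:ℝ) 1,
        t * c x + (1 - t) * c y ≤ c (t • x + (1 - t) • y))
    (hcmono : ∀ x y : Fin d → ℝ, (∀ i, 0 ≤ x i) → (∀ i, x i ≤ y i) → c x ≤ c y)
    (hc0 : c 0 = 0)
    (v : (Fin d → ℝ) → ℝ) :
    sSup {s : ℝ | ∃ u : (Fin d → ℝ) → ℝ, ∃ xbar ∈ X, InClassC d u ∧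
        (∀ x ∈ X, u x - c x ≤ u xbar - c xbar) ∧ s = v xbar - u xbar}
      = sSup {s : ℝ | ∃ x ∈ X, s = v x - c x} ∧
    (∀ xstar ∈ X, (∀ i, 0 < xstar i) →
      (∀ x ∈ X, v x - c x ≤ v xstar - c xstar) →
      ∀ ustar : (Fin d → ℝ) → ℝ,
        (∀ x : Fin d → ℝ,
          ustar x = (c xstar) * min (⨅ i, x i / xstar i) 1) →
        InClassC d ustar ∧
        (∀ x ∈ X, ustar x - c x ≤ ustar xstar - c xstar) ∧
        v xstar - ustar xstar
          = sSup {s : ℝ | ∃ u : (Fin d → ℝ) → ℝ, ∃ xbar ∈ X, InClassC d u ∧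
              (∀ x ∈ X, u x - c x ≤ u xbar - c xbar) ∧ s = v xbar - u xbar} ∧
        ustar xstar - c xstar = 0) :=
  stmt7_general d hd X hX0 hXpos c hcconc hcmono hc0 v
end

section
/- Let G be a simple graph on vertex set {1, …, d} and define U_G : ℝ^d → ℝ by U_G(x) = Σ_{i=1}^d [xᵢ − min(Σ_{j adjacent to i} xⱼ, xᵢ)]. If I ⊆ {1, …, d} is an independent set of G and x ∈ {0,1}^d is its indicator vector (xᵢ = 1 iff i ∈ I), then U_G(x) = |I|. Consequently, sup_{x ∈ [0,1]^d} U_G(x) is at least the independence number of G. -/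
/-- The buyer surplus function from the NP-hardness reduction of Theorem 4:
`U_G(x) = Σᵢ [xᵢ − min(Σ_{j adjacent to i} xⱼ, xᵢ)]`. -/
noncomputable def UG (d : ℕ) (G : SimpleGraph (Fin d)) [DecidableRel G.Adj]
    (x : Fin d → ℝ) : ℝ :=
  ∑ i, (x i - min (∑ j ∈ Finset.univ.filter (fun j => G.Adj i j), x j) (x i))

/-- The independence number of `G`: the maximum cardinality of a set of
pairwise non-adjacent vertices. -/
noncomputable def indepNum (d : ℕ) (G : SimpleGraph (Fin d)) : ℕ :=
  sSup {n : ℕ | ∃ S : Finset (Fin d), (∀ i ∈ S, ∀ j ∈ S, ¬ G.Adj i j) ∧ S.card = n}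

/-- if `I` is an independent set of `G` and `x` is its indicator
vector, then `U_G(x) = |I|`; consequently `sup_{x ∈ [0,1]^d} U_G(x)` is at
least the independence number of `G`. -/
theorem stmt10 (d : ℕ) (G : SimpleGraph (Fin d)) [DecidableRel G.Adj]
    (I : Finset (Fin d)) (hI : ∀ i ∈ I, ∀ j ∈ I, ¬ G.Adj i j)
    (x : Fin d → ℝ) (hx : ∀ i, x i = if i ∈ I then 1 else 0) :
    UG d G x = I.card ∧
    (indepNum d G : ℝ) ≤
      sSup {s : ℝ | ∃ y : Fin d → ℝ, (∀ i, 0 ≤ y i ∧ y i ≤ 1) ∧ s = UG d G y} := by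
  -- key: for any independent set J, UG of its indicator equals its cardinality
  have key : ∀ (J : Finset (Fin d)), (∀ i ∈ J, ∀ j ∈ J, ¬ G.Adj i j) →
      UG d G (fun i => if i ∈ J then 1 else 0) = J.card := by
    intro J hJ
    unfold UG
    have hterm : ∀ i, ((if i ∈ J then (1:ℝ) else 0) -
        min (∑ j ∈ Finset.univ.filter (fun j => G.Adj i j),
          (if j ∈ J then (1:ℝ) else 0)) (if i ∈ J then 1 else 0))
        = if i ∈ J then 1 else 0 := by
      intro i
      by_cases hi : i ∈ J
      · have hs : ∑ j ∈ Finset.univ.filter (fun j => G.Adj i j),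
            (if j ∈ J then (1:ℝ) else 0) = 0 := by
          apply Finset.sum_eq_zero
          intro j hj
          simp only [Finset.mem_filter] at hj
          have : j ∉ J := fun hjJ => hJ i hi j hjJ hj.2
          simp [this]
        simp [hi, hs]
      · have hs : 0 ≤ ∑ j ∈ Finset.univ.filter (fun j => G.Adj i j),
            (if j ∈ J then (1:ℝ) else 0) :=
          Finset.sum_nonneg (fun j _ => by positivity)
        simp [hi, min_eq_right hs]
    rw [Finset.sum_congr rfl (fun i _ => hterm i)]
    simp
  have hx' : x = fun i => if i ∈ I then 1 else 0 := funext hx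
  refine ⟨by rw [hx']; exact key I hI, ?_⟩
  -- the real set is bounded above by d
  set T : Set ℝ := {s : ℝ | ∃ y : Fin d → ℝ, (∀ i, 0 ≤ y i ∧ y i ≤ 1) ∧ s = UG d G y}
  have hbdd : BddAbove T := by
    refine ⟨d, ?_⟩
    rintro s ⟨y, hy, rfl⟩
    unfold UG
    calc ∑ i, (y i - min (∑ j ∈ Finset.univ.filter (fun j => G.Adj i j), y j) (y i))
        ≤ ∑ i : Fin d, (1:ℝ) := by
          apply Finset.sum_le_sum
          intro i _
          have h0 : 0 ≤ min (∑ j ∈ Finset.univ.filter (fun j => G.Adj i j), y j) (y i) :=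
            le_min (Finset.sum_nonneg fun j _ => (hy j).1) (hy i).1
          linarith [(hy i).2]
      _ = d := by simp
  -- indepNum is attained by some independent set
  set N : Set ℕ := {n : ℕ | ∃ S : Finset (Fin d),
    (∀ i ∈ S, ∀ j ∈ S, ¬ G.Adj i j) ∧ S.card = n}
  have hN0 : (0 : ℕ) ∈ N := ⟨∅, by simp, by simp⟩
  have hNbdd : BddAbove N := by
    refine ⟨d, ?_⟩
    rintro n ⟨S, _, rfl⟩
    simpa using S.card_le_univ
  have hmem : indepNum d G ∈ N := Nat.sSup_mem ⟨0, hN0⟩ hNbdd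
  obtain ⟨S, hSind, hScard⟩ := hmem
  have hin : ((indepNum d G : ℝ)) ∈ T := by
    refine ⟨fun i => if i ∈ S then 1 else 0, ?_, ?_⟩
    · intro i; by_cases h : i ∈ S <;> simp [h]
    · rw [key S hSind, hScard]
  exact le_csSup hbdd hin
end

section
/- Let G be a simple graph on vertex set {1, …, d} and define U_G : ℝ^d → ℝ by U_G(x) = Σ_{i=1}^d [xᵢ − min(Σ_{j adjacent to i} xⱼ, xᵢ)]. For every binary vector x ∈ {0,1}^d with support S = {i : xᵢ = 1}, one has U_G(x) = |{i ∈ S : no neighbor of i lies in S}|; moreover the set {i ∈ S : no neighbor of i lies in S} is an independent set of G, so U_G(x) is at most the independence number of G. -/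
/-- for a binary vector `x` with support `S`,
`U_G(x) = |{i ∈ S : no neighbor of i lies in S}|`; this set is an independent
set of `G`, so `U_G(x)` is at most the independence number of `G`. -/
theorem stmt11 (d : ℕ) (G : SimpleGraph (Fin d)) [DecidableRel G.Adj]
    (x : Fin d → ℝ) (hx : ∀ i, x i = 0 ∨ x i = 1)
    (S : Finset (Fin d)) (hS : ∀ i, i ∈ S ↔ x i = 1)
    (T : Finset (Fin d)) (hT : ∀ i, i ∈ T ↔ i ∈ S ∧ ∀ j ∈ S, ¬ G.Adj i j) :
    UG d G x = T.card ∧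
    (∀ i ∈ T, ∀ j ∈ T, ¬ G.Adj i j) ∧
    UG d G x ≤ (indepNum d G : ℝ) := by
  have hT_indep : ∀ i ∈ T, ∀ j ∈ T, ¬ G.Adj i j := by
    intro i hi j hj
    exact ((hT i).1 hi).2 j ((hT j).1 hj).1
  have hxnn : ∀ j, (0:ℝ) ≤ x j := fun j => by rcases hx j with h | h <;> simp [h]
  have key : ∀ i, x i - min (∑ j ∈ Finset.univ.filter (fun j => G.Adj i j), x j) (x i)
      = if i ∈ T then (1:ℝ) else 0 := by
    intro i
    by_cases hiS : i ∈ S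
    · have hxi : x i = 1 := (hS i).1 hiS
      by_cases hiT : i ∈ T
      · have hno : ∀ j ∈ S, ¬ G.Adj i j := ((hT i).1 hiT).2
        have hsum : ∑ j ∈ Finset.univ.filter (fun j => G.Adj i j), x j = 0 := by
          apply Finset.sum_eq_zero
          intro j hj
          simp only [Finset.mem_filter] at hj
          rcases hx j with h | h
          · exact h
          · exact absurd hj.2 (hno j ((hS j).2 h))
        rw [hsum, hxi]
        simp [hiT]
      · have hex : ∃ j ∈ S, G.Adj i j := by
          by_contra hcon
          push_neg at hcon
          exact hiT ((hT i).2 ⟨hiS, hcon⟩)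
        obtain ⟨j, hjS, hadj⟩ := hex
        have hsum : (1:ℝ) ≤ ∑ k ∈ Finset.univ.filter (fun k => G.Adj i k), x k := by
          have := Finset.single_le_sum (f := x) (fun k _ => hxnn k)
            (Finset.mem_filter.2 ⟨Finset.mem_univ j, hadj⟩)
          rwa [(hS j).1 hjS] at this
        rw [min_eq_right (by rw [hxi]; exact hsum), hxi]
        simp [hiT]
    · have hxi : x i = 0 := by
        rcases hx i with h | h
        · exact h
        · exact absurd ((hS i).2 h) hiS
      have hiT : i ∉ T := fun h => hiS ((hT i).1 h).1
      have hnn : (0:ℝ) ≤ ∑ j ∈ Finset.univ.filter (fun j => G.Adj i j), x j :=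
        Finset.sum_nonneg fun j _ => hxnn j
      rw [hxi, min_eq_right hnn]
      simp [hiT]
  have hUG : UG d G x = T.card := by
    rw [UG, Finset.sum_congr rfl (fun i _ => key i), Finset.sum_ite_mem]
    simp
  refine ⟨hUG, hT_indep, ?_⟩
  have hbdd : BddAbove {n : ℕ | ∃ S : Finset (Fin d),
      (∀ i ∈ S, ∀ j ∈ S, ¬ G.Adj i j) ∧ S.card = n} := by
    refine ⟨d, fun n hn => ?_⟩
    obtain ⟨S', _, hc⟩ := hn
    calc n = S'.card := hc.symm
    _ ≤ (Finset.univ : Finset (Fin d)).card := Finset.card_le_card (Finset.subset_univ S')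
    _ = d := by simp
  have hmem : T.card ∈ {n : ℕ | ∃ S : Finset (Fin d),
      (∀ i ∈ S, ∀ j ∈ S, ¬ G.Adj i j) ∧ S.card = n} := ⟨T, hT_indep, rfl⟩
  have := le_csSup hbdd hmem
  rw [hUG]
  exact_mod_cast this
end

section
/- Let G be a simple graph on vertex set {1, …, d} and define U_G : ℝ^d → ℝ by U_G(x) = Σ_{i=1}^d [xᵢ − min(Σ_{j adjacent to i} xⱼ, xᵢ)]. Then the supremum of U_G over the cube [0,1]^d is attained and equals the independence number of G. -/
/-- the supremum of `U_G` over the cube `[0,1]^d` is attained and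
equals the independence number of `G`. -/
theorem stmt12 (d : ℕ) (G : SimpleGraph (Fin d)) [DecidableRel G.Adj] :
    IsGreatest {s : ℝ | ∃ x : Fin d → ℝ, (∀ i, 0 ≤ x i ∧ x i ≤ 1) ∧ s = UG d G x}
      (indepNum d G : ℝ) := by
  have hbdd : BddAbove {n : ℕ | ∃ S : Finset (Fin d),
      (∀ i ∈ S, ∀ j ∈ S, ¬ G.Adj i j) ∧ S.card = n} := by
    refine ⟨d, ?_⟩
    rintro n ⟨S, -, rfl⟩
    simpa using S.card_le_univ
  have hne : {n : ℕ | ∃ S : Finset (Fin d),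
      (∀ i ∈ S, ∀ j ∈ S, ¬ G.Adj i j) ∧ S.card = n}.Nonempty :=
    ⟨0, ∅, by simp, by simp⟩
  constructor
  · -- attained by indicator of a maximum independent set
    obtain ⟨S, hS, hc⟩ := Nat.sSup_mem hne hbdd
    refine ⟨fun i => if i ∈ S then 1 else 0, fun i => by by_cases h : i ∈ S <;> simp [h], ?_⟩
    have : UG d G (fun i => if i ∈ S then (1:ℝ) else 0)
        = ∑ i, (if i ∈ S then (1:ℝ) else 0) := by
      unfold UG
      refine Finset.sum_congr rfl fun i _ => ?_
      by_cases hi : i ∈ S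
      · have hsum : (∑ j ∈ Finset.univ.filter (fun j => G.Adj i j),
            (if j ∈ S then (1:ℝ) else 0)) = 0 := by
          refine Finset.sum_eq_zero fun j hj => ?_
          simp only [Finset.mem_filter] at hj
          have : j ∉ S := fun hjS => hS i hi j hjS hj.2
          simp [this]
        simp [hi, hsum]
      · have hsum : (0:ℝ) ≤ ∑ j ∈ Finset.univ.filter (fun j => G.Adj i j),
            (if j ∈ S then (1:ℝ) else 0) := by
          refine Finset.sum_nonneg fun j _ => ?_
          split <;> norm_num
        simp [hi, min_eq_right hsum]
    rw [this]
    unfold indepNum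
    rw [← hc]
    simp
  · -- upper bound
    rintro s ⟨x, hx, rfl⟩
    set T := Finset.univ.filter
      (fun i => (∑ j ∈ Finset.univ.filter (fun j => G.Adj i j), x j) < x i) with hT
    have hsnn : ∀ i : Fin d, 0 ≤ ∑ j ∈ Finset.univ.filter (fun j => G.Adj i j), x j :=
      fun i => Finset.sum_nonneg fun j _ => (hx j).1
    have hTindep : ∀ i ∈ T, ∀ j ∈ T, ¬ G.Adj i j := by
      intro i hi j hj hadj
      rw [hT, Finset.mem_filter] at hi hj
      have h1 : x j ≤ ∑ k ∈ Finset.univ.filter (fun k => G.Adj i k), x k :=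
        Finset.single_le_sum (fun k _ => (hx k).1) (by simp [hadj])
      have h2 : x i ≤ ∑ k ∈ Finset.univ.filter (fun k => G.Adj j k), x k :=
        Finset.single_le_sum (fun k _ => (hx k).1) (by simp [hadj.symm])
      linarith [hi.2, hj.2]
    have hcard : T.card ≤ indepNum d G := le_csSup hbdd ⟨T, hTindep, rfl⟩
    have hle : UG d G x ≤ (T.card : ℝ) := by
      unfold UG
      calc ∑ i, (x i - min (∑ j ∈ Finset.univ.filter (fun j => G.Adj i j), x j) (x i))
          ≤ ∑ i, (if i ∈ T then (1:ℝ) else 0) := by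
            refine Finset.sum_le_sum fun i _ => ?_
            by_cases hi : i ∈ T
            · have h0 : (0:ℝ) ≤ min (∑ j ∈ Finset.univ.filter (fun j => G.Adj i j), x j)
                  (x i) := le_min (hsnn i) (hx i).1
              simp only [hi, if_true]
              linarith [(hx i).2]
            · have hge : x i ≤ ∑ j ∈ Finset.univ.filter (fun j => G.Adj i j), x j := by
                rw [hT, Finset.mem_filter] at hi
                push_neg at hi
                exact hi (Finset.mem_univ i)
              simp [hi, min_eq_right hge]
        _ = (T.card : ℝ) := by simp
    exact hle.trans (Nat.cast_le.mpr hcard)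
end

section
/- Define p̃ : [0,∞) → ℝ by p̃(x) = min(√x, (5/9)x + 2/5). Then the function x ↦ √x − p̃(x) on [0,∞) attains its maximum uniquely at x = 0.81, with maximum value 1/20; moreover p̃(0.81) = 0.85, and the resulting seller revenue p̃(0.81) − (0.81)² = 0.1939 is strictly greater than 3/16. -/
/-- computation in the proof of Proposition 1, with ε = 0.05:
with `p̃(x) = min(√x, (5/9)x + 2/5)`, the function `x ↦ √x − p̃(x)` on `[0,∞)`
attains its maximum uniquely at `x = 0.81`, with maximum value `1/20`;
moreover `p̃(0.81) = 0.85` and the seller revenue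
`p̃(0.81) − 0.81² = 0.1939` is strictly greater than `3/16`. -/
theorem stmt18 (pt : ℝ → ℝ)
    (hpt : ∀ x : ℝ, pt x = min (Real.sqrt x) ((5 / 9) * x + 2 / 5)) :
    (∀ x : ℝ, 0 ≤ x → Real.sqrt x - pt x ≤ Real.sqrt 0.81 - pt 0.81) ∧
    (∀ x : ℝ, 0 ≤ x → x ≠ 0.81 →
      Real.sqrt x - pt x < Real.sqrt 0.81 - pt 0.81) ∧
    Real.sqrt 0.81 - pt 0.81 = 1 / 20 ∧
    pt 0.81 = 0.85 ∧
    pt 0.81 - (0.81 : ℝ) ^ 2 = 0.1939 ∧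
    (3 / 16 : ℝ) < 0.1939 := by
  have h081 : Real.sqrt 0.81 = 0.9 := by
    rw [show (0.81 : ℝ) = 0.9 ^ 2 by norm_num, Real.sqrt_sq (by norm_num)]
  have hpt81 : pt 0.81 = 0.85 := by
    rw [hpt, h081]; norm_num
  have hval : Real.sqrt 0.81 - pt 0.81 = 1 / 20 := by
    rw [h081, hpt81]; norm_num
  have key : ∀ x : ℝ, 0 ≤ x → x ≠ 0.81 → Real.sqrt x - pt x < 1 / 20 := by
    intro x hx hne
    set t := Real.sqrt x with ht
    have htnn : 0 ≤ t := Real.sqrt_nonneg x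
    have htx : t ^ 2 = x := Real.sq_sqrt hx
    rw [hpt]
    rcases min_cases t ((5 / 9) * x + 2 / 5) with ⟨hm, _⟩ | ⟨hm, _⟩
    · rw [hm]; norm_num
    · rw [hm]
      have htne : t ≠ 0.9 := by
        intro h
        apply hne
        rw [← htx, h]; norm_num
      have hsq : 0 < (t - 0.9) ^ 2 := by
        have := sub_ne_zero.mpr htne
        positivity
      nlinarith [htx]
  refine ⟨?_, ?_, hval, hpt81, by rw [hpt81]; norm_num, by norm_num⟩
  · intro x hx
    rcases eq_or_ne x 0.81 with rfl | hne
    · exact le_refl _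
    · exact le_of_lt (by rw [hval]; exact key x hx hne)
  · intro x hx hne
    rw [hval]; exact key x hx hne
end
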